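/- arXiv:1805.03307 — 2 statements merged into one kernel-verified Lean document; each statement's English description precedes it below -/
import Mathlib

section
/- Let D : A → A be a linear map. Then D is a derivation of A, i.e. D(x·y) = D(x)·y + x·D(y) for all x, y ∈ A, if and only if D(e_k) = k • (e_{k−1} · D(e_1)) for all 2 ≤ k ≤ n. Equivalently, writing D(e_1) = Σ_{i=1}^{n} α_i e_i, every derivation D of A satisfies D(e_k) = k · Σ_{i=1}^{n−k+1} α_i e_{k−1+i} for all 1 ≤ k ≤ n. -/
open Finset

/-- Coordinate space of the `n`-dimensional complex null-filiform associative algebra,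
with respect to the basis `e_1, …, e_n` (coordinate `m : Fin n` corresponds to `e_{m+1}`). -/
abbrev NF (n : ℕ) : Type := Fin n → ℂ

/-- Multiplication of the null-filiform algebra: `e_i · e_j = e_{i+j}` if `i + j ≤ n`
and `e_i · e_j = 0` if `i + j > n`, extended bilinearly. -/
noncomputable def nfMul {n : ℕ} (x y : NF n) : NF n :=
  fun m => ∑ i : Fin n, ∑ j : Fin n,
    if (i : ℕ) + (j : ℕ) + 1 = (m : ℕ) then x i * y j else 0

/-- The basis element `e_k`, for `1 ≤ k ≤ n` (it is `0` if `k = 0` or `k > n`). -/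
noncomputable def nfE (n k : ℕ) : NF n := fun m => if (m : ℕ) + 1 = k then 1 else 0

/-- The `k`-th power (for `k ≥ 1`) of an element of the null-filiform algebra. -/
noncomputable def nfPow {n : ℕ} (x : NF n) : ℕ → NF n
  | 0 => 0
  | 1 => x
  | k + 2 => nfMul (nfPow x (k + 1)) x

/-! Since `e_a · e_b = e_{a+b}`, the algebra is generated by `e_1`. The Leibniz rule gives
`D(e_{k+1}) = D(e_k) e_1 + e_k D(e_1)`, whence `D(e_k) = k e_{k-1} D(e_1)` by induction.
Conversely, for such a `D` both sides of the Leibniz rule on a pair of basis vectors `e_a, e_b`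
equal `(a + b) e_{a+b-1} D(e_1)`, and the rule extends to all `x, y` by bilinearity.
Multiplication by `e_{k-1}` shifts coordinates by `k - 1`, which gives the explicit formula. -/

section NullFiliform
variable {n : ℕ}

theorem nfMul_comm (x y : NF n) : nfMul x y = nfMul y x := by
  ext m
  rw [nfMul, nfMul, Finset.sum_comm]
  exact sum_congr rfl fun i _ ↦ sum_congr rfl fun j _ ↦ if_congr (by omega) (mul_comm _ _) rfl

noncomputable def nfMulₗ : NF n →ₗ[ℂ] NF n →ₗ[ℂ] NF n :=
  LinearMap.mk₂ ℂ nfMul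
    (fun x x' y ↦ by
      ext m; simp only [nfMul, Pi.add_apply, ← sum_add_distrib, add_mul, ite_add_zero])
    (fun c x y ↦ by
      ext m; simp only [nfMul, Pi.smul_apply, smul_eq_mul, mul_sum, mul_ite, mul_zero, mul_assoc])
    (fun x y y' ↦ by
      ext m; simp only [nfMul, Pi.add_apply, ← sum_add_distrib, mul_add, ite_add_zero])
    (fun c x y ↦ by
      ext m; simp only [nfMul, Pi.smul_apply, smul_eq_mul, mul_sum, mul_ite, mul_zero, mul_left_comm])

@[simp] theorem nfMulₗ_apply (x y : NF n) : nfMulₗ x y = nfMul x y := rfl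

theorem nfMul_smul_left (c : ℂ) (x y : NF n) : nfMul (c • x) y = c • nfMul x y :=
  nfMulₗ.map_smul₂ c x y

theorem nfMul_smul_right (c : ℂ) (x y : NF n) : nfMul x (c • y) = c • nfMul x y :=
  (nfMulₗ x).map_smul c y

theorem nfMul_sum_right {ι : Type*} (s : Finset ι) (x : NF n) (f : ι → NF n) :
    nfMul x (∑ i ∈ s, f i) = ∑ i ∈ s, nfMul x (f i) :=
  map_sum (nfMulₗ x) f s

theorem nfE_succ (i : Fin n) : nfE n (i + 1) = Pi.single i 1 := by
  ext m
  simp [nfE, Pi.single_apply, Fin.ext_iff]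

theorem nfE_eq_zero_of_lt {k : ℕ} (h : n < k) : nfE n k = 0 := by
  ext m
  exact if_neg (by omega)

theorem nfE_mul_nfE {a b : ℕ} (ha : 1 ≤ a) (hb : 1 ≤ b) :
    nfMul (nfE n a) (nfE n b) = nfE n (a + b) := by
  ext m
  simp only [nfMul, nfE, mul_ite, ite_mul, one_mul, zero_mul, mul_zero, ← ite_and]
  split_ifs with h
  · rw [Fintype.sum_eq_single ⟨a - 1, by omega⟩, Fintype.sum_eq_single ⟨b - 1, by omega⟩,
      if_pos (by simp only; omega)]
    · exact fun j hj ↦ if_neg fun hc ↦ hj (Fin.ext (by simp only; omega))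
    · exact fun i hi ↦ sum_eq_zero fun j _ ↦ if_neg fun hc ↦ hi (Fin.ext (by simp only; omega))
  · exact sum_eq_zero fun i _ ↦ sum_eq_zero fun j _ ↦ if_neg (by omega)

theorem sum_smul_nfE_one_add (y : NF n) : ∑ i : Fin n, y i • nfE n (1 + i) = y := by
  simp only [add_comm 1, nfE_succ]
  exact (pi_eq_sum_univ' y).symm

theorem nfE_mul_eq_sum {a : ℕ} (ha : 1 ≤ a) (y : NF n) :
    nfMul (nfE n a) y = ∑ i : Fin n, y i • nfE n (a + 1 + i) := by
  conv_lhs => rw [← sum_smul_nfE_one_add y]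
  simp only [nfMul_sum_right, nfMul_smul_right, nfE_mul_nfE ha (Nat.le_add_right 1 _), add_assoc]

theorem nfE_mul_nfE_mul {a b : ℕ} (ha : 1 ≤ a) (hb : 1 ≤ b) (y : NF n) :
    nfMul (nfE n a) (nfMul (nfE n b) y) = nfMul (nfE n (a + b)) y := by
  rw [nfE_mul_eq_sum (a := a + b) (by omega), nfE_mul_eq_sum hb]
  simp (disch := omega) only [nfMul_sum_right, nfMul_smul_right, nfE_mul_nfE, add_assoc]

theorem nfE_mul_eq_zero {a : ℕ} (ha : 1 ≤ a) (han : n ≤ a) (y : NF n) :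
    nfMul (nfE n a) y = 0 := by
  rw [nfE_mul_eq_sum ha]
  exact sum_eq_zero fun i _ ↦ by rw [nfE_eq_zero_of_lt (by omega), smul_zero]

def IsNfDerivation (D : NF n →ₗ[ℂ] NF n) : Prop :=
  ∀ x y : NF n, D (nfMul x y) = nfMul (D x) y + nfMul x (D y)

variable {D : NF n →ₗ[ℂ] NF n}

theorem IsNfDerivation.apply_nfE (hD : IsNfDerivation D) {k : ℕ} (hk : 2 ≤ k) :
    D (nfE n k) = (k : ℂ) • nfMul (nfE n (k - 1)) (D (nfE n 1)) := by
  induction k, hk using Nat.le_induction with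
  | base =>
    rw [← nfE_mul_nfE le_rfl le_rfl, hD, nfMul_comm (D _), Nat.cast_two, two_smul]
  | succ k hk ih =>
    rw [← nfE_mul_nfE (by omega : 1 ≤ k) le_rfl, hD, ih, nfMul_smul_left,
      nfMul_comm _ (nfE n 1), nfE_mul_nfE_mul le_rfl (by omega), Nat.add_sub_cancel,
      Nat.add_sub_cancel' (by omega : 1 ≤ k), Nat.cast_succ, add_smul, one_smul]

theorem isNfDerivation_of_nfE
    (h : ∀ a b : ℕ, 1 ≤ a → 1 ≤ b → D (nfMul (nfE n a) (nfE n b)) =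
      nfMul (D (nfE n a)) (nfE n b) + nfMul (nfE n a) (D (nfE n b))) :
    IsNfDerivation D := by
  have : nfMulₗ.compr₂ D = nfMulₗ ∘ₗ D + nfMulₗ.compl₂ D :=
    LinearMap.ext_basis (Pi.basisFun ℂ (Fin n)) (Pi.basisFun ℂ (Fin n)) fun i j ↦ by
      simpa [← nfE_succ] using h (i + 1) (j + 1) (by omega) (by omega)
  exact fun x y ↦ by simpa using LinearMap.congr_fun₂ this x y

theorem nfMul_apply_nfE_nfE_of_apply_nfE
    (hD : ∀ k, 2 ≤ k → D (nfE n k) = (k : ℂ) • nfMul (nfE n (k - 1)) (D (nfE n 1)))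
    {a b : ℕ} (ha : 1 ≤ a) (hb : 1 ≤ b) :
    nfMul (D (nfE n a)) (nfE n b) = (a : ℂ) • nfMul (nfE n (a + b - 1)) (D (nfE n 1)) := by
  obtain rfl | ha := ha.eq_or_lt
  · rw [nfMul_comm, Nat.add_sub_cancel_left, Nat.cast_one, one_smul]
  · rw [hD a ha, nfMul_smul_left, nfMul_comm _ (nfE n b), nfE_mul_nfE_mul hb (by omega),
      show b + (a - 1) = a + b - 1 by omega]

theorem isNfDerivation_of_apply_nfE
    (hD : ∀ k, 2 ≤ k → k ≤ n → D (nfE n k) = (k : ℂ) • nfMul (nfE n (k - 1)) (D (nfE n 1))) :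
    IsNfDerivation D := by
  have hD' : ∀ k, 2 ≤ k → D (nfE n k) = (k : ℂ) • nfMul (nfE n (k - 1)) (D (nfE n 1)) := by
    intro k hk
    by_cases hkn : k ≤ n
    · exact hD k hk hkn
    · rw [nfE_eq_zero_of_lt (by omega), map_zero, nfE_mul_eq_zero (by omega) (by omega), smul_zero]
  refine isNfDerivation_of_nfE fun a b ha hb ↦ ?_
  rw [nfE_mul_nfE ha hb, hD' _ (by omega), nfMul_apply_nfE_nfE_of_apply_nfE hD' ha hb,
    nfMul_comm (nfE n a), nfMul_apply_nfE_nfE_of_apply_nfE hD' hb ha, add_comm b a, ← add_smul,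
    Nat.cast_add]

theorem IsNfDerivation.apply_nfE_eq_sum (hD : IsNfDerivation D) {k : ℕ} (hk : 1 ≤ k) :
    D (nfE n k) = (k : ℂ) • ∑ i : Fin n, D (nfE n 1) i • nfE n (k + i) := by
  obtain rfl | hk := hk.eq_or_lt
  · rw [Nat.cast_one, one_smul, sum_smul_nfE_one_add]
  · rw [hD.apply_nfE hk, nfE_mul_eq_sum (by omega), Nat.sub_add_cancel (by omega)]

end NullFiliform

theorem derivations_on_null_filiform_general (n : ℕ) (D : NF n →ₗ[ℂ] NF n) :
    ((∀ x y : NF n, D (nfMul x y) = nfMul (D x) y + nfMul x (D y)) ↔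
      (∀ k, 2 ≤ k → k ≤ n →
        D (nfE n k) = (k : ℂ) • nfMul (nfE n (k - 1)) (D (nfE n 1)))) ∧
    ((∀ x y : NF n, D (nfMul x y) = nfMul (D x) y + nfMul x (D y)) →
      ∀ k, 1 ≤ k → k ≤ n →
        D (nfE n k) = (k : ℂ) • ∑ i : Fin n, D (nfE n 1) i • nfE n (k + (i : ℕ))) :=
  ⟨⟨fun hD _ hk _ ↦ IsNfDerivation.apply_nfE hD hk, isNfDerivation_of_apply_nfE⟩,
    fun hD _ hk _ ↦ IsNfDerivation.apply_nfE_eq_sum hD hk⟩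

/-- A linear map `D` on the null-filiform algebra is a derivation iff
`D(e_k) = k • (e_{k-1} · D(e_1))` for all `2 ≤ k ≤ n`; equivalently, every derivation
satisfies `D(e_k) = k · ∑ α_i e_{k-1+i}` where `D(e_1) = ∑ α_i e_i`. -/
theorem derivations_on_null_filiform (n : ℕ) (hn : 1 ≤ n) (D : NF n →ₗ[ℂ] NF n) :
    ((∀ x y : NF n, D (nfMul x y) = nfMul (D x) y + nfMul x (D y)) ↔
      (∀ k, 2 ≤ k → k ≤ n →
        D (nfE n k) = (k : ℂ) • nfMul (nfE n (k - 1)) (D (nfE n 1)))) ∧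
    ((∀ x y : NF n, D (nfMul x y) = nfMul (D x) y + nfMul x (D y)) →
      ∀ k, 1 ≤ k → k ≤ n →
        D (nfE n k) = (k : ℂ) • ∑ i : Fin n, D (nfE n 1) i • nfE n (k + (i : ℕ))) :=
  derivations_on_null_filiform_general n D
end

section
/- Let d : A → A be a linear map that is a differential operator of weight 1 on A, i.e. d(x·y) = d(x)·y + x·d(y) + d(x)·d(y) for all x, y ∈ A. Then for all 1 ≤ k ≤ n one has d(e_k) = (e_1 + d(e_1))^k − e_k, where the power is taken in A. -/
open Finset

lemma nfMul_add_left {n : ℕ} (a b c : NF n) :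
    nfMul (a + b) c = nfMul a c + nfMul b c := by
  funext m
  simp only [nfMul, Pi.add_apply, ← Finset.sum_add_distrib]
  refine Finset.sum_congr rfl fun i _ => Finset.sum_congr rfl fun j _ => ?_
  split_ifs <;> ring

lemma nfMul_add_right {n : ℕ} (a b c : NF n) :
    nfMul a (b + c) = nfMul a b + nfMul a c := by
  funext m
  simp only [nfMul, Pi.add_apply, ← Finset.sum_add_distrib]
  refine Finset.sum_congr rfl fun i _ => Finset.sum_congr rfl fun j _ => ?_
  split_ifs <;> ring

lemma e_mul_e1 {n : ℕ} (hn : 1 ≤ n) (j : ℕ) (hj : 1 ≤ j) :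
    nfMul (nfE n j) (nfE n 1) = nfE n (j + 1) := by
  funext m
  simp only [nfMul, nfE]
  rw [Finset.sum_comm]
  rw [Finset.sum_eq_single (⟨0, hn⟩ : Fin n)]
  · by_cases hm : (m : ℕ) = j
    · have hm1 : (m : ℕ) - 1 < n := lt_of_le_of_lt (Nat.sub_le _ _) m.isLt
      rw [Finset.sum_eq_single (⟨(m : ℕ) - 1, hm1⟩ : Fin n)]
      · simp only [Fin.val_mk]
        split_ifs <;> first | (exfalso; omega) | norm_num
      · intro i _ hi
        have hiv : (i : ℕ) ≠ (m : ℕ) - 1 := fun h => hi (Fin.ext (by simpa using h))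
        simp only [Fin.val_mk]
        split_ifs <;> first | (exfalso; omega) | norm_num
      · intro h; exact absurd (Finset.mem_univ _) h
    · have : ∀ i : Fin n, (if (i : ℕ) + ((⟨0, hn⟩ : Fin n) : ℕ) + 1 = (m : ℕ) then
          (if (i : ℕ) + 1 = j then (1:ℂ) else 0) * (if ((⟨0, hn⟩ : Fin n) : ℕ) + 1 = 1 then 1 else 0)
          else 0) = 0 := by
        intro i
        simp only [Fin.val_mk]
        split_ifs <;> first | (exfalso; omega) | norm_num
      rw [Finset.sum_congr rfl (fun i _ => this i), Finset.sum_const, smul_zero]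
      split_ifs <;> first | (exfalso; omega) | norm_num
  · intro j' _ hj'
    apply Finset.sum_eq_zero
    intro i _
    have hne : (j' : ℕ) ≠ 0 := fun h => hj' (Fin.ext (by simpa using h))
    split_ifs <;> first | (exfalso; omega) | norm_num
  · intro h; exact absurd (Finset.mem_univ _) h

/-- Every differential operator `d` of weight `1` on the null-filiform algebra satisfies
`d(e_k) = (e_1 + d(e_1))^k − e_k` for all `1 ≤ k ≤ n`. -/
theorem weight_one_differential_formula (n : ℕ) (hn : 1 ≤ n)
    (d : NF n →ₗ[ℂ] NF n)
    (hd : ∀ x y : NF n,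
        d (nfMul x y) = nfMul (d x) y + nfMul x (d y) + nfMul (d x) (d y)) :
    ∀ k, 1 ≤ k → k ≤ n →
      d (nfE n k) = nfPow (nfE n 1 + d (nfE n 1)) k - nfE n k := by

  have hD : ∀ a b : NF n,
      nfMul (a + d a) (b + d b) = nfMul a b + d (nfMul a b) := by
    intro a b
    rw [hd, nfMul_add_left, nfMul_add_right, nfMul_add_right]
    abel
  have key : ∀ k, 1 ≤ k → nfPow (nfE n 1) k = nfE n k ∧
      nfPow (nfE n 1 + d (nfE n 1)) k = nfE n k + d (nfE n k) := by
    intro k hk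
    induction k, hk using Nat.le_induction with
    | base => exact ⟨rfl, rfl⟩
    | succ k hk ih =>
      obtain ⟨m, rfl⟩ := Nat.exists_eq_add_of_le hk
      rw [show 1 + m + 1 = m + 1 + 1 from by omega, show 1 + m = m + 1 from by omega] at *
      constructor
      · show nfMul (nfPow (nfE n 1) (m + 1)) (nfE n 1) = _
        rw [ih.1, e_mul_e1 hn _ (by omega)]
      · show nfMul (nfPow (nfE n 1 + d (nfE n 1)) (m + 1)) (nfE n 1 + d (nfE n 1)) = _
        rw [ih.2, ← ih.1, hD, ih.1, e_mul_e1 hn _ (by omega)]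
  intro k hk _
  rw [(key k hk).2]
  abel
end
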